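/- Let G = (V,E) be a simple graph on n vertices and k ≥ 3. Construct H by adding a clique W of size k²·n disjoint from V, and for each v ∈ V adding n − deg_G(v) edges from v to distinct vertices of W. Then H has a k-cut of value (k−1)n − C(k−1,2) if and only if G contains a clique on k−1 vertices; moreover the minimum k-cut value of H is exactly (k−1)n − (maximum number of edges among any k−1 vertices of G), assuming n is sufficiently large relative to k (e.g. n > k³). -/

import Mathlib

/-!
A `k`-cut of `H` is encoded as a surjective colouring `f : V ⊕ W → Fin k`, the cut edges being
the bichromatic ones. If `f` splits the clique `W`, at least `|W| - 1 ≥ (k - 1) n` edges are cut.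
Otherwise `W` is monochromatic, and one vertex of `V` from each of the other `k - 1` colour
classes forms a set `S`. The edges meeting `S` inject into the cut edges: a bichromatic edge is
sent to itself, and a monochromatic edge from `S` to a vertex `x` to an edge from `x` into `W`,
which exists because `deg_H x = n > deg_G x`. As every vertex of `V` has degree `n`, there are
`(k - 1) n - e_G(S)` edges meeting `S`, so `minH ≥ (k - 1) n - maxE`; isolating a densest
`(k - 1)`-set of `V` as singletons shows equality. Finally `maxE = C(k - 1, 2)` exactly when that
set is a clique.
-/

attribute [local instance] Classical.propDecidable

/-- `P` is a partition of the vertex set into `k` nonempty parts. -/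
def IsPartitionOn {V : Type*} (k : ℕ) (P : Fin k → Finset V) : Prop :=
  (∀ i, (P i).Nonempty) ∧ (∀ i j, i ≠ j → Disjoint (P i) (P j)) ∧ ∀ v : V, ∃ i, v ∈ P i

/-- Number of edges of the simple graph `H` crossing between parts of the partition. -/
noncomputable def cutValS {X : Type*} [Fintype X] (H : SimpleGraph X) {k : ℕ}
    (P : Fin k → Finset X) : ℕ :=
  (H.edgeFinset.filter fun e => ∀ i, ¬ ∀ x ∈ e, x ∈ P i).card

open Finset

lemma exists_surjective_and_forall_notMem_eq {X ι : Type*} [Fintype ι] {A : Finset X}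
    (hA : #A + 1 = Fintype.card ι) {x₀ : X} (hx₀ : x₀ ∉ A) (j : ι) :
    ∃ f : X → ι, Function.Surjective f ∧ ∀ x ∉ A, f x = j := by
  have e : A ≃ {i // i ≠ j} := Fintype.equivOfCardEq (by simp; omega)
  refine ⟨fun x => if hx : x ∈ A then e ⟨x, hx⟩ else j, fun i => ?_,
    fun x hx => dif_neg hx⟩
  by_cases hi : i = j
  · exact ⟨x₀, by simp [hx₀, hi]⟩
  · exact ⟨e.symm ⟨i, hi⟩, by simp⟩

namespace SimpleGraph

section EdgeCounting

variable {V : Type*} [Fintype V] [DecidableEq V] (G : SimpleGraph V)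

noncomputable def edgesInside (S : Finset V) : Finset (Sym2 V) :=
  G.edgeFinset.filter fun e => ∀ x ∈ e, x ∈ S

noncomputable def edgesMeeting (S : Finset V) : Finset (Sym2 V) :=
  G.edgeFinset.filter fun e => ∃ x ∈ e, x ∈ S

variable {G}

@[simp]
lemma mem_edgesInside {S : Finset V} {e : Sym2 V} :
    e ∈ G.edgesInside S ↔ e ∈ G.edgeSet ∧ ∀ x ∈ e, x ∈ S := by
  simp [edgesInside]

@[simp]
lemma mem_edgesMeeting {S : Finset V} {e : Sym2 V} :
    e ∈ G.edgesMeeting S ↔ e ∈ G.edgeSet ∧ ∃ x ∈ e, x ∈ S := by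
  simp [edgesMeeting]

lemma _root_.Sym2.card_filter_mem_of_not_isDiag {e : Sym2 V} (he : ¬ e.IsDiag) (S : Finset V) :
    #(S.filter (· ∈ e)) =
      (if ∃ x ∈ e, x ∈ S then 1 else 0) + (if ∀ x ∈ e, x ∈ S then 1 else 0) := by
  induction e with
  | _ x y =>
    have hxy : x ≠ y := by simpa using he
    have hfilter : S.filter (· ∈ s(x, y)) = {x, y} ∩ S := by ext; simp [and_comm]
    rw [hfilter]
    by_cases hx : x ∈ S <;> by_cases hy : y ∈ S <;>
      simp [insert_inter_of_mem, insert_inter_of_notMem, hx, hy, hxy]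

variable (G) in
theorem sum_degree_eq_card_edgesMeeting_add_card_edgesInside (S : Finset V) :
    ∑ a ∈ S, G.degree a = #(G.edgesMeeting S) + #(G.edgesInside S) := by
  calc ∑ a ∈ S, G.degree a = ∑ a ∈ S, #(G.edgeFinset.filter (a ∈ ·)) := by
        simp [← card_incidenceFinset_eq_degree, incidenceFinset_eq_filter]
    _ = ∑ e ∈ G.edgeFinset, #(S.filter (· ∈ e)) := by
        simp_rw [card_filter]
        exact sum_comm
    _ = ∑ e ∈ G.edgeFinset,
          ((if ∃ x ∈ e, x ∈ S then 1 else 0) + (if ∀ x ∈ e, x ∈ S then 1 else 0)) :=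
        sum_congr rfl fun e he =>
          Sym2.card_filter_mem_of_not_isDiag (G.not_isDiag_of_mem_edgeFinset he) S
    _ = _ := by
        rw [sum_add_distrib, sum_boole, sum_boole]
        rfl

lemma edgesInside_subset_image_offDiag (S : Finset V) :
    G.edgesInside S ⊆ S.offDiag.image (Function.uncurry Sym2.mk) := by
  intro e he
  induction e with
  | _ x y =>
    simp only [mem_edgesInside, mem_edgeSet, Sym2.mem_iff, forall_eq_or_imp, forall_eq] at he
    exact mem_image.2 ⟨(x, y), mem_offDiag.2 ⟨he.2.1, he.2.2, he.1.ne⟩, rfl⟩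

lemma card_edgesInside_le_choose_two (S : Finset V) : #(G.edgesInside S) ≤ (#S).choose 2 :=
  (card_le_card (edgesInside_subset_image_offDiag S)).trans (Sym2.card_image_offDiag S).le

lemma card_edgesInside_eq_choose_two_iff (S : Finset V) :
    #(G.edgesInside S) = (#S).choose 2 ↔ G.IsClique (S : Set V) := by
  rw [← Sym2.card_image_offDiag S]
  constructor
  · intro h x hx y hy hxy
    have hall := eq_of_subset_of_card_le (edgesInside_subset_image_offDiag S) h.ge
    have hxy' : s(x, y) ∈ G.edgesInside S :=
      hall ▸ mem_image.2 ⟨(x, y), mem_offDiag.2 ⟨hx, hy, hxy⟩, rfl⟩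
    exact (mem_edgesInside.1 hxy').1
  · intro h
    refine congrArg card (Subset.antisymm (edgesInside_subset_image_offDiag S) ?_)
    intro e he
    obtain ⟨⟨x, y⟩, hxy, rfl⟩ := mem_image.1 he
    obtain ⟨hx, hy, hne⟩ := mem_offDiag.1 hxy
    simp only [Function.uncurry_apply_pair, mem_edgesInside, mem_edgeSet, Sym2.mem_iff]
    exact ⟨h hx hy hne, by rintro z (rfl | rfl) <;> assumption⟩

lemma isGreatest_card_edgesInside_eq_choose_two_iff {m M : ℕ}
    (hM : IsGreatest {c | ∃ S : Finset V, #S = m ∧ c = #(G.edgesInside S)} M) :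
    M = m.choose 2 ↔ ∃ S : Finset V, G.IsNClique m S := by
  obtain ⟨⟨S₀, hS₀, rfl⟩, hmax⟩ := hM
  constructor
  · intro h
    exact ⟨S₀, ⟨(card_edgesInside_eq_choose_two_iff S₀).1 (hS₀ ▸ h), hS₀⟩⟩
  · rintro ⟨S, hS⟩
    refine le_antisymm (hS₀ ▸ card_edgesInside_le_choose_two S₀) ?_
    rw [← hS.card_eq, ← (card_edgesInside_eq_choose_two_iff S).2 hS.isClique]
    exact hmax ⟨S, hS.card_eq, rfl⟩

lemma Embedding.card_edgesInside_map {W : Type*} [Fintype W] [DecidableEq W]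
    {H : SimpleGraph W} (φ : G ↪g H) (S : Finset V) :
    #(H.edgesInside (S.map φ.toEmbedding)) = #(G.edgesInside S) := by
  symm
  refine card_nbij (Sym2.map φ) (fun e he => ?_) (Sym2.map.injective φ.injective).injOn
    (fun e he => ?_)
  · induction e with
    | _ x y => simpa [φ.map_adj_iff] using he
  · induction e with
    | _ x y =>
      simp only [mem_edgesInside, mem_edgeSet, Sym2.mem_iff, forall_eq_or_imp,
        forall_eq, mem_coe, mem_map] at he
      obtain ⟨hadj, ⟨a, ha, rfl⟩, ⟨b, hb, rfl⟩⟩ := he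
      refine ⟨s(a, b), ?_, rfl⟩
      simp_all [φ.map_adj_iff]

end EdgeCounting

section Cuts

variable {X ι : Type*} [Fintype X] {H : SimpleGraph X}

variable (H) in
noncomputable def cutEdges (f : X → ι) : Finset (Sym2 X) :=
  H.edgeFinset.filter fun e => ¬ (e.map f).IsDiag

@[simp]
lemma mem_cutEdges {f : X → ι} {e : Sym2 X} :
    e ∈ H.cutEdges f ↔ e ∈ H.edgeSet ∧ ¬ (e.map f).IsDiag := by
  simp [cutEdges]

lemma cutValS_eq_card_cutEdges {k : ℕ} {P : Fin k → Finset X} {f : X → Fin k}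
    (hf : ∀ x i, x ∈ P i ↔ f x = i) : cutValS H P = #(H.cutEdges f) := by
  unfold cutValS cutEdges
  congr 1
  ext e
  simp only [mem_filter]
  refine and_congr_right fun _ => ?_
  induction e with
  | _ x y =>
    simp only [Sym2.mem_iff, forall_eq_or_imp, forall_eq, hf, Sym2.map_mk, Sym2.mk_isDiag_iff]
    exact ⟨fun h hxy => h (f x) ⟨rfl, hxy.symm⟩, fun h i hi => h (hi.1.trans hi.2.symm)⟩

variable (H) in
lemma setOf_isPartitionOn_cutValS_eq (k : ℕ) :
    {c : ℕ | ∃ P : Fin k → Finset X, IsPartitionOn k P ∧ c = cutValS H P} =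
      {c : ℕ | ∃ f : X → Fin k, Function.Surjective f ∧ c = #(H.cutEdges f)} := by
  ext c
  constructor
  · rintro ⟨P, ⟨hne, hdisj, hcover⟩, rfl⟩
    choose f hf using hcover
    have hmem : ∀ x i, x ∈ P i ↔ f x = i := fun x i =>
      ⟨fun hx => by_contra fun h => Finset.disjoint_left.1 (hdisj _ _ h) (hf x) hx,
        fun h => h ▸ hf x⟩
    refine ⟨f, fun i => ?_, cutValS_eq_card_cutEdges hmem⟩
    obtain ⟨x, hx⟩ := hne i
    exact ⟨x, (hmem x i).1 hx⟩
  · rintro ⟨f, hf, rfl⟩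
    have hmem : ∀ x i, x ∈ univ.filter (f · = i) ↔ f x = i := by simp
    refine ⟨fun i => univ.filter (f · = i), ⟨fun i => ?_, fun i j hij => ?_, fun x => ?_⟩,
      (cutValS_eq_card_cutEdges hmem).symm⟩
    · obtain ⟨x, rfl⟩ := hf i
      exact ⟨x, by simp⟩
    · exact disjoint_filter.2 fun x _ hi hj => hij (hi ▸ hj)
    · exact ⟨f x, by simp⟩

lemma card_sub_one_le_card_cutEdges_of_isClique {K : Finset X} (hK : H.IsClique (K : Set X))
    {f : X → ι} {a b : X} (ha : a ∈ K) (hb : b ∈ K) (hab : f a ≠ f b) :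
    #K - 1 ≤ #(H.cutEdges f) := by
  set B := K.filter (f · = f a)
  set C := K.filter (f · ≠ f a)
  have hB : 1 ≤ #B := card_pos.2 ⟨a, by simp [B, ha]⟩
  have hC : 1 ≤ #C := card_pos.2 ⟨b, by simp [C, hb, hab.symm]⟩
  have hBC : #B * #C ≤ #(H.cutEdges f) := by
    rw [← card_product]
    refine card_le_card_of_injOn (fun p => s(p.1, p.2)) (fun p hp => ?_) (fun p hp q hq hpq => ?_)
    · simp only [coe_product, Set.mem_prod, mem_coe, mem_filter, B, C] at hp
      have hne : f p.1 ≠ f p.2 := hp.1.2 ▸ Ne.symm hp.2.2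
      simp only [mem_coe, mem_cutEdges, mem_edgeSet, Sym2.map_mk, Sym2.mk_isDiag_iff]
      exact ⟨hK hp.1.1 hp.2.1 fun h => hne (congrArg f h), hne⟩
    · simp only [coe_product, Set.mem_prod, mem_coe, mem_filter, B, C] at hp hq
      rcases Sym2.eq_iff.1 hpq with ⟨h1, h2⟩ | ⟨h1, _⟩
      · exact Prod.ext h1 h2
      · exact absurd (h1 ▸ hp.1.2) hq.2.2
  have hsum : #B + #C = #K := card_filter_add_card_filter_not _
  have hprod : #B + #C ≤ #B * #C + 1 := by nlinarith
  omega

variable [DecidableEq X]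

lemma cutEdges_subset_edgesMeeting {f : X → ι} {j : ι} {A : Finset X}
    (hf : ∀ x ∉ A, f x = j) : H.cutEdges f ⊆ H.edgesMeeting A := by
  intro e he
  induction e with
  | _ x y =>
    simp only [mem_cutEdges, mem_edgesMeeting, Sym2.map_mk, Sym2.mk_isDiag_iff,
      Sym2.mem_iff, exists_eq_or_imp, exists_eq_left] at he ⊢
    refine ⟨he.1, by_contra fun h => he.2 ?_⟩
    push Not at h
    rw [hf x h.1, hf y h.2]

section Transversal

variable {f : X → ι} {j : ι} {S : Finset X}

lemma card_edgesMeeting_sdiff_cutEdges_le (hSj : ∀ s ∈ S, f s ≠ j) (hS : Set.InjOn f S)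
    (hcover : ∀ x, f x ≠ j → ∃ s ∈ S, f s = f x) :
    #(H.edgesMeeting S \ H.cutEdges f) ≤ #(univ.filter fun x => f x ≠ j ∧ x ∉ S) := by
  have hcover' : ∀ x, ∃ s, f x ≠ j → s ∈ S ∧ f s = f x := fun x =>
    if hx : f x = j then ⟨x, fun h => absurd hx h⟩ else (hcover x hx).imp fun _ hs _ => hs
  choose rep hrep using hcover'
  have hmate : ∀ a b, H.Adj a b → a ∈ S → f a = f b →
      b ∈ univ.filter (fun x => f x ≠ j ∧ x ∉ S) ∧ rep b = a := by
    intro a b hab ha hfab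
    have hb : b ∉ S := fun hb => hab.ne (hS ha hb hfab)
    have hbj : f b ≠ j := hfab ▸ hSj a ha
    obtain ⟨hrepS, hfrep⟩ := hrep b hbj
    exact ⟨by simp [hbj, hb], hS hrepS ha (hfrep.trans hfab.symm)⟩
  refine card_le_card_of_surjOn (fun x => s(x, rep x)) fun e he => ?_
  induction e with
  | _ a b =>
    simp only [mem_coe, mem_sdiff, mem_edgesMeeting, mem_cutEdges, mem_edgeSet, Sym2.mem_iff,
      exists_eq_or_imp, exists_eq_left, Sym2.map_mk, Sym2.mk_isDiag_iff, not_and,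
      not_not] at he
    obtain ⟨⟨hab, ha | hb⟩, huncut⟩ := he
    · obtain ⟨hbR, hrep⟩ := hmate a b hab ha (huncut hab)
      exact ⟨b, hbR, by simp only [hrep, Sym2.eq_swap]⟩
    · obtain ⟨haR, hrep⟩ := hmate b a hab.symm hb (huncut hab).symm
      exact ⟨a, haR, by simp only [hrep]⟩

lemma card_le_card_cutEdges_sdiff_edgesMeeting (hSj : ∀ s ∈ S, f s ≠ j)
    (hadj : ∀ x, f x ≠ j → ∃ y, H.Adj x y ∧ f y = j) :
    #(univ.filter fun x => f x ≠ j ∧ x ∉ S) ≤ #(H.cutEdges f \ H.edgesMeeting S) := by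
  have hadj' : ∀ x, ∃ y, f x ≠ j → H.Adj x y ∧ f y = j := fun x =>
    if hx : f x = j then ⟨x, fun h => absurd hx h⟩ else (hadj x hx).imp fun _ hy _ => hy
  choose nbr hnbr using hadj'
  refine card_le_card_of_injOn (fun x => s(x, nbr x)) (fun x hx => ?_) (fun x hx y hy hxy => ?_)
  · simp only [coe_filter, mem_univ, true_and, Set.mem_ofPred_eq] at hx
    obtain ⟨hadjx, hfx⟩ := hnbr x hx.1
    simp only [mem_coe, mem_sdiff, mem_cutEdges, mem_edgeSet, Sym2.map_mk, Sym2.mk_isDiag_iff,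
      mem_edgesMeeting, Sym2.mem_iff, exists_eq_or_imp, exists_eq_left, hfx]
    exact ⟨⟨hadjx, hx.1⟩, fun h => h.2.elim hx.2 fun hS' => hSj _ hS' hfx⟩
  · simp only [coe_filter, mem_univ, true_and, Set.mem_ofPred_eq] at hx hy
    rcases Sym2.eq_iff.1 hxy with ⟨h, _⟩ | ⟨h, _⟩
    · exact h
    · exact absurd (h ▸ (hnbr y hy.1).2) hx.1

lemma card_edgesMeeting_le_card_cutEdges (hSj : ∀ s ∈ S, f s ≠ j) (hS : Set.InjOn f S)
    (hcover : ∀ x, f x ≠ j → ∃ s ∈ S, f s = f x)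
    (hadj : ∀ x, f x ≠ j → ∃ y, H.Adj x y ∧ f y = j) :
    #(H.edgesMeeting S) ≤ #(H.cutEdges f) := by
  rw [← card_inter_add_card_sdiff (H.edgesMeeting S) (H.cutEdges f),
    ← card_inter_add_card_sdiff (H.cutEdges f) (H.edgesMeeting S), inter_comm]
  exact Nat.add_le_add_left ((card_edgesMeeting_sdiff_cutEdges_le hSj hS hcover).trans
    (card_le_card_cutEdges_sdiff_edgesMeeting hSj hadj)) _

end Transversal

end Cuts

section Reduction

variable {V W : Type*} [Fintype V] [Fintype W] {G : SimpleGraph V} {H : SimpleGraph (V ⊕ W)}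

lemma sub_one_mul_card_le_card_cutEdges_of_ne {ι : Type*} {k : ℕ}
    (hW : Fintype.card W = k ^ 2 * Fintype.card V)
    (hHW : ∀ w w' : W, H.Adj (.inr w) (.inr w') ↔ w ≠ w') (hk : 1 ≤ k)
    {f : V ⊕ W → ι} {w w' : W} (hw : f (.inr w) ≠ f (.inr w')) :
    (k - 1) * Fintype.card V ≤ #(H.cutEdges f) := by
  have hclique : H.IsClique (univ.map .inr : Finset (V ⊕ W)) := by
    rintro _ hx _ hy hxy
    simp only [coe_map, coe_univ, Set.image_univ, Set.mem_range] at hx hy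
    obtain ⟨w, rfl⟩ := hx
    obtain ⟨w', rfl⟩ := hy
    exact (hHW w w').2 fun h => hxy (h ▸ rfl)
  have hcut := card_sub_one_le_card_cutEdges_of_isClique hclique
    (mem_map_of_mem _ (mem_univ w)) (mem_map_of_mem _ (mem_univ w')) hw
  rw [card_map, card_univ, hW] at hcut
  have hV : 0 < Fintype.card V := Nat.pos_of_mul_pos_left (hW ▸ Fintype.card_pos_iff.2 ⟨w⟩)
  have hk2 : k - 1 + 1 ≤ k ^ 2 := (Nat.sub_add_cancel hk).trans_le (Nat.le_self_pow two_ne_zero k)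
  have := Nat.mul_le_mul_right (Fintype.card V) hk2
  rw [Nat.add_mul, one_mul] at this
  omega

variable [DecidableEq V] [DecidableEq W]

lemma exists_adj_inr_of_degree_eq (hdeg : ∀ v : V, H.degree (.inl v) = Fintype.card V) (v : V) :
    ∃ w, H.Adj (.inl v) (.inr w) := by
  by_contra! h
  have hsub : H.neighborFinset (.inl v) ⊆ (univ.erase v).map .inl := by
    intro x hx
    rw [mem_neighborFinset] at hx
    cases x with
    | inl u => simpa using (H.ne_of_adj hx).symm
    | inr w => exact absurd hx (h w)
  have hcard := card_le_card hsub
  rw [card_neighborFinset_eq_degree, hdeg, card_map, card_erase_of_mem (mem_univ v),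
    card_univ] at hcard
  have : 0 < Fintype.card V := Fintype.card_pos_iff.2 ⟨v⟩
  omega

lemma card_edgesMeeting_map_inl_add_card_edgesInside
    (hHV : ∀ u v : V, H.Adj (.inl u) (.inl v) ↔ G.Adj u v)
    (hdeg : ∀ v : V, H.degree (.inl v) = Fintype.card V) (S : Finset V) :
    #(H.edgesMeeting (S.map .inl)) + #(G.edgesInside S) = #S * Fintype.card V := by
  let φ : G ↪g H := ⟨.inl, hHV _ _⟩
  rw [← φ.card_edgesInside_map S, ← sum_degree_eq_card_edgesMeeting_add_card_edgesInside,
    sum_map]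
  exact (sum_congr rfl fun v _ => hdeg v).trans (by rw [sum_const, smul_eq_mul])

lemma exists_surjective_card_cutEdges_add_card_edgesInside_le
    (hHV : ∀ u v : V, H.Adj (.inl u) (.inl v) ↔ G.Adj u v)
    (hdeg : ∀ v : V, H.degree (.inl v) = Fintype.card V) [Nonempty W] {k : ℕ} (hk : 1 ≤ k)
    {S : Finset V} (hS : #S = k - 1) :
    ∃ f : V ⊕ W → Fin k, Function.Surjective f ∧
      #(H.cutEdges f) + #(G.edgesInside S) ≤ (k - 1) * Fintype.card V := by
  obtain ⟨w⟩ := ‹Nonempty W›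
  obtain ⟨f, hf, hfS⟩ := exists_surjective_and_forall_notMem_eq (ι := Fin k) (A := S.map .inl)
    (by simp; omega) (x₀ := .inr w) (by simp) ⟨0, hk⟩
  refine ⟨f, hf, ?_⟩
  have hmeet := card_edgesMeeting_map_inl_add_card_edgesInside hHV hdeg S
  have hcut := card_le_card (cutEdges_subset_edgesMeeting (H := H) hfS)
  rw [hS] at hmeet
  omega

lemma exists_le_card_cutEdges_add_card_edgesInside
    (hHV : ∀ u v : V, H.Adj (.inl u) (.inl v) ↔ G.Adj u v)
    (hdeg : ∀ v : V, H.degree (.inl v) = Fintype.card V) {k : ℕ} {f : V ⊕ W → Fin k}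
    (hf : Function.Surjective f) {j : Fin k} (hj : ∀ w, f (.inr w) = j) :
    ∃ S : Finset V, #S = k - 1 ∧
      (k - 1) * Fintype.card V ≤ #(H.cutEdges f) + #(G.edgesInside S) := by
  have hsec : ∀ i : {i // i ≠ j}, ∃ v : V, f (.inl v) = i := by
    intro i
    obtain ⟨x | w, hx⟩ := hf i
    · exact ⟨x, hx⟩
    · exact absurd ((hj w).symm.trans hx) (Ne.symm i.2)
  choose s hs using hsec
  have hs_inj : Function.Injective s := fun i i' h => Subtype.ext (by rw [← hs i, ← hs i', h])
  have hS : #(univ.image s) = k - 1 := by simp [card_image_of_injective _ hs_inj]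
  refine ⟨univ.image s, hS, ?_⟩
  have hmeet := card_edgesMeeting_map_inl_add_card_edgesInside hHV hdeg (univ.image s)
  rw [hS] at hmeet
  suffices #(H.edgesMeeting ((univ.image s).map .inl)) ≤ #(H.cutEdges f) by omega
  apply card_edgesMeeting_le_card_cutEdges (j := j)
  · simp only [mem_map, mem_image, mem_univ, true_and]
    rintro _ ⟨_, ⟨i, rfl⟩, rfl⟩
    simpa [hs] using i.2
  · simp only [Set.InjOn, coe_map, Set.mem_image, mem_coe, mem_image, mem_univ, true_and]
    rintro _ ⟨_, ⟨i, rfl⟩, rfl⟩ _ ⟨_, ⟨i', rfl⟩, rfl⟩ h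
    have : f (.inl (s i)) = f (.inl (s i')) := h
    rw [hs, hs] at this
    rw [Subtype.ext this]
  · intro x hx
    exact ⟨.inl (s ⟨f x, hx⟩), mem_map_of_mem _ (mem_image_of_mem _ (mem_univ _)), hs _⟩
  · rintro (v | w) hv
    · obtain ⟨w, hw⟩ := exists_adj_inr_of_degree_eq hdeg v
      exact ⟨.inr w, hw, hj w⟩
    · exact absurd (hj w) hv

end Reduction

end SimpleGraph

open SimpleGraph

theorem stmt_16_general {V W : Type*} [Fintype V] [DecidableEq V] [Fintype W]
    (G : SimpleGraph V) (k : ℕ) (hk : 3 ≤ k)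
    (hW : Fintype.card W = k ^ 2 * Fintype.card V)
    (H : SimpleGraph (V ⊕ W))
    (hHV : ∀ u v : V, H.Adj (.inl u) (.inl v) ↔ G.Adj u v)
    (hHW : ∀ w w' : W, H.Adj (.inr w) (.inr w') ↔ w ≠ w')
    (hdeg : ∀ v : V, H.degree (.inl v) = Fintype.card V)
    (minH maxE : ℕ)
    (hmin : IsLeast {c : ℕ | ∃ P : Fin k → Finset (V ⊕ W),
      IsPartitionOn k P ∧ c = cutValS H P} minH)
    (hmax : IsGreatest {c : ℕ | ∃ S : Finset V, S.card = k - 1 ∧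
      c = (G.edgeFinset.filter fun e => ∀ x ∈ e, x ∈ S).card} maxE) :
    (minH = (k - 1) * Fintype.card V - (k - 1).choose 2 ↔
      ∃ S : Finset V, G.IsNClique (k - 1) S) ∧
    minH = (k - 1) * Fintype.card V - maxE := by
  rw [setOf_isPartitionOn_cutValS_eq] at hmin
  obtain ⟨S₀, hS₀, hmaxE⟩ : ∃ S₀ : Finset V, #S₀ = k - 1 ∧ maxE = #(G.edgesInside S₀) :=
    hmax.1
  have hkV : k - 1 ≤ Fintype.card V := hS₀ ▸ card_le_univ S₀
  have : Nonempty W := Fintype.card_pos_iff.1 (hW ▸ Nat.mul_pos (by positivity) (by omega))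
  have hupper : minH + maxE ≤ (k - 1) * Fintype.card V := by
    obtain ⟨f, hf, hle⟩ :=
      exists_surjective_card_cutEdges_add_card_edgesInside_le hHV hdeg (by omega) hS₀
    exact hmaxE ▸ (Nat.add_le_add_right (hmin.2 ⟨f, hf, rfl⟩) _).trans hle
  have hlower : (k - 1) * Fintype.card V ≤ minH + maxE := by
    obtain ⟨f, hf, rfl⟩ := hmin.1
    by_cases hWj : ∃ j, ∀ w, f (.inr w) = j
    · obtain ⟨j, hj⟩ := hWj
      obtain ⟨S, hS, hle⟩ := exists_le_card_cutEdges_add_card_edgesInside hHV hdeg hf hj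
      exact hle.trans (Nat.add_le_add_left (hmax.2 ⟨S, hS, rfl⟩) _)
    · push Not at hWj
      obtain ⟨w₀⟩ := ‹Nonempty W›
      obtain ⟨w, hw⟩ := hWj (f (.inr w₀))
      exact (sub_one_mul_card_le_card_cutEdges_of_ne hW hHW (by omega) hw).trans
        (Nat.le_add_right _ _)
  have hminH : minH = (k - 1) * Fintype.card V - maxE := by omega
  have hchoose : (k - 1).choose 2 ≤ (k - 1) * Fintype.card V := by
    rw [Nat.choose_two_right]
    exact (Nat.div_le_self _ _).trans (Nat.mul_le_mul_left _ (by omega))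
  refine ⟨?_, hminH⟩
  rw [hminH, tsub_right_inj (by omega) hchoose]
  exact isGreatest_card_edgesInside_eq_choose_two_iff hmax

/-- Hardness reduction (proof of the lower bound theorem): given a simple graph `G` on
`n` vertices, form `H` on `V ⊕ W` where `W` is a clique of size `k²n`, `H` agrees with
`G` on `V`, and every `v ∈ V` gets total degree exactly `n` by edges to distinct
vertices of `W`. Then, for `n > k³`, the minimum `k`-cut of `H` equals
`(k−1)n − C(k−1,2)` iff `G` has a `(k−1)`-clique; moreover it equals
`(k−1)n − (max number of edges among any k−1 vertices of G)`. -/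
theorem stmt_16 {V W : Type*} [Fintype V] [DecidableEq V] [Fintype W] [DecidableEq W]
    (G : SimpleGraph V) (k : ℕ) (hk : 3 ≤ k)
    (hn : k ^ 3 < Fintype.card V)
    (hW : Fintype.card W = k ^ 2 * Fintype.card V)
    (H : SimpleGraph (V ⊕ W))
    (hHV : ∀ u v : V, H.Adj (.inl u) (.inl v) ↔ G.Adj u v)
    (hHW : ∀ w w' : W, H.Adj (.inr w) (.inr w') ↔ w ≠ w')
    (hdeg : ∀ v : V, H.degree (.inl v) = Fintype.card V)
    (minH maxE : ℕ)
    (hmin : IsLeast {c : ℕ | ∃ P : Fin k → Finset (V ⊕ W),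
      IsPartitionOn k P ∧ c = cutValS H P} minH)
    (hmax : IsGreatest {c : ℕ | ∃ S : Finset V, S.card = k - 1 ∧
      c = (G.edgeFinset.filter fun e => ∀ x ∈ e, x ∈ S).card} maxE) :
    (minH = (k - 1) * Fintype.card V - (k - 1).choose 2 ↔
      ∃ S : Finset V, G.IsNClique (k - 1) S) ∧
    minH = (k - 1) * Fintype.card V - maxE :=
  stmt_16_general G k hk hW H hHV hHW hdeg minH maxE hmin hmax
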